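/- arXiv:2511.18527 — 3 statements merged into one kernel-verified Lean document; each statement's English description precedes it below -/
import Mathlib

section
/- A topological space X is T0 if and only if for every point x, the derived set of {x} is a union of closed sets (equivalently, for every y in the derived set of {x}, closure {y} is contained in the derived set of {x}). -/
/-! Both directions come down to one observation: a point `y ∈ closure {x} \ {x}` whose closure
contains `x` is inseparable from `x` without being equal to it, which is what T0 excludes. -/

section

variable {X : Type*} [TopologicalSpace X]

theorem closure_singleton_subset_closure_singleton_diff [T0Space X] {x y : X}
    (hy : y ∈ closure {x} \ {x}) : closure {y} ⊆ closure {x} \ {x} := by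
  obtain ⟨hxy, hyx⟩ := hy
  intro z hz
  rw [← specializes_iff_mem_closure] at hxy hz
  refine ⟨(hxy.trans hz).mem_closure, ?_⟩
  rintro rfl
  exact hyx (hz.antisymm hxy).eq

theorem t0Space_of_closure_singleton_subset_closure_singleton_diff
    (h : ∀ x : X, ∀ y ∈ closure {x} \ {x}, closure {y} ⊆ closure ({x} : Set X) \ {x}) :
    T0Space X := by
  refine ⟨fun x y hxy => by_contra fun hne => ?_⟩
  have hy : y ∈ closure {x} \ {x} := ⟨hxy.specializes.mem_closure, Ne.symm hne⟩
  exact (h x y hy hxy.specializes'.mem_closure).2 rfl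

end

/-- `X` is T0 iff for every `x`, the derived set of `{x}` (i.e. `closure {x} \ {x}`)
is a union of closed sets: every `y` in it has `closure {y}` contained in it. -/
theorem stmt_3 {X : Type*} [TopologicalSpace X] :
    T0Space X ↔
      ∀ x : X, ∀ y ∈ closure ({x} : Set X) \ {x},
        closure ({y} : Set X) ⊆ closure ({x} : Set X) \ {x} :=
  ⟨fun _ _ _ => closure_singleton_subset_closure_singleton_diff,
    t0Space_of_closure_singleton_subset_closure_singleton_diff⟩
end

section
/- A topological space X is TD (every singleton is locally closed) if and only if for every subset A of X, the derived set A' of A is closed. -/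
/-!
If `{x}` is locally closed, then `coborder {x}` is an open neighbourhood of `x` whose points
other than `x` lie outside `closure {x}`. So when `x` is a limit of accumulation points `y` of `A`,
neighbourhoods of such `y ≠ x` that avoid `closure {x}` yield points of `A` other than `x` close
to `x`: the derived set is closed. Conversely, `derivedSet {x} = closure {x} \ {x}`, and `{x}` is
locally closed exactly when this set is closed.
-/

open Set

section

variable {X : Type*} [TopologicalSpace X]

lemma mem_derivedSet_iff_mem_closure_diff {A : Set X} {x : X} :
    x ∈ derivedSet A ↔ x ∈ closure (A \ {x}) := by
  rw [mem_derivedSet, accPt_principal_iff_clusterPt, mem_closure_iff_clusterPt]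

lemma setOf_mem_closure_diff_eq_derivedSet (A : Set X) :
    {x : X | x ∈ closure (A \ {x})} = derivedSet A :=
  ext fun _ => mem_derivedSet_iff_mem_closure_diff.symm

lemma derivedSet_singleton (x : X) : derivedSet {x} = closure {x} \ {x} := by
  ext y
  rw [mem_derivedSet_iff_mem_closure_diff]
  rcases eq_or_ne y x with rfl | hyx
  · simp
  · rw [sdiff_singleton_eq_self (mt mem_singleton_iff.mp hyx)]
    simp [hyx]

lemma isLocallyClosed_singleton_iff_isClosed_derivedSet {x : X} :
    IsLocallyClosed {x} ↔ IsClosed (derivedSet {x}) := by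
  rw [isLocallyClosed_iff_isOpen_coborder, coborder, derivedSet_singleton, isOpen_compl_iff]

lemma IsLocallyClosed.mem_derivedSet_of_mem_closure {x : X} (hx : IsLocallyClosed {x})
    {A : Set X} (h : x ∈ closure (derivedSet A)) : x ∈ derivedSet A := by
  rw [mem_derivedSet_iff_mem_closure_diff, mem_closure_iff]
  intro o ho hxo
  obtain ⟨y, ⟨hyo, hyx⟩, hyA⟩ := mem_closure_iff.mp h (o ∩ coborder {x})
    (ho.inter hx.isOpen_coborder) ⟨hxo, by simp [coborder_eq_union_closure_compl]⟩
  rw [mem_derivedSet_iff_mem_closure_diff] at hyA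
  rcases eq_or_ne y x with rfl | hne
  · exact mem_closure_iff.mp hyA o ho hyo
  have hy : y ∉ closure {x} := by
    simpa [coborder_eq_union_closure_compl, hne] using hyx
  obtain ⟨z, ⟨hzo, hzx⟩, hzA, -⟩ := mem_closure_iff.mp hyA (o ∩ (closure {x})ᶜ)
    (ho.inter isClosed_closure.isOpen_compl) ⟨hyo, hy⟩
  exact ⟨z, hzo, hzA, fun hz => hzx (subset_closure hz)⟩

lemma forall_isLocallyClosed_singleton_iff_forall_isClosed_derivedSet :
    (∀ x : X, IsLocallyClosed {x}) ↔ ∀ A : Set X, IsClosed (derivedSet A) :=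
  ⟨fun h _ => isClosed_of_closure_subset fun x hx => (h x).mem_derivedSet_of_mem_closure hx,
    fun h _ => isLocallyClosed_singleton_iff_isClosed_derivedSet.mpr (h _)⟩

end

/-- `X` is TD (every singleton is locally closed) iff the derived set of every
subset is closed. -/
theorem stmt_16 {X : Type*} [TopologicalSpace X] :
    (∀ x : X, ∃ U F : Set X, IsOpen U ∧ IsClosed F ∧ ({x} : Set X) = U ∩ F) ↔
      ∀ A : Set X, IsClosed {x : X | x ∈ closure (A \ {x})} := by
  simp only [setOf_mem_closure_diff_eq_derivedSet]
  exact forall_isLocallyClosed_singleton_iff_forall_isClosed_derivedSet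
end

section
/- If (X_α)_{α ∈ A} is an infinite family of topological spaces none of which is T1, then the product space Π X_α with the product topology is not TD: it contains a point whose singleton is not locally closed. -/
/-!
Each non-T1 factor has a point `x i` specializing to some `y i ≠ x i`. If `{x}` were locally
closed, some neighbourhood of `x` would contain no proper specialization of `x`. But a
neighbourhood in the product constrains only finitely many coordinates, so for an unconstrained
coordinate `j` it contains `update x j (y j)`, a proper specialization of `x`.
-/

open Filter Topology

theorem IsLocallyClosed.exists_mem_nhds_forall_specializes {X : Type*} [TopologicalSpace X]
    {s : Set X} {x : X} (hs : IsLocallyClosed s) (hx : x ∈ s) :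
    ∃ U ∈ 𝓝 x, ∀ z ∈ U, x ⤳ z → z ∈ s := by
  obtain ⟨U, Z, hU, hZ, rfl⟩ := hs
  exact ⟨U, hU.mem_nhds hx.1, fun z hzU hxz => ⟨hzU, hxz.mem_closed hZ hx.2⟩⟩

theorem eventually_cofinite_update_mem_of_mem_nhds {ι : Type*} [DecidableEq ι] {X : ι → Type*}
    [∀ i, TopologicalSpace (X i)] {x : ∀ i, X i} {U : Set (∀ i, X i)} (hU : U ∈ 𝓝 x) :
    ∀ᶠ j in cofinite, ∀ a, Function.update x j a ∈ U := by
  rw [nhds_pi, Filter.mem_pi] at hU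
  obtain ⟨I, hI, t, ht, hIU⟩ := hU
  refine hI.subset fun j hj => ?_
  by_contra hjI
  refine hj fun a => hIU fun i hi => ?_
  rw [Function.update_of_ne (ne_of_mem_of_not_mem hi hjI)]
  exact mem_of_mem_nhds (ht i)

theorem exists_specializes_ne_of_not_t1Space {X : Type*} [TopologicalSpace X] (h : ¬ T1Space X) :
    ∃ x y : X, x ⤳ y ∧ y ≠ x := by
  simpa [t1Space_iff_specializes_imp_eq, eq_comm] using h

theorem specializes_update_self {ι : Type*} [DecidableEq ι] {X : ι → Type*}
    [∀ i, TopologicalSpace (X i)] {x : ∀ i, X i} {j : ι} {a : X j} (h : x j ⤳ a) :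
    x ⤳ Function.update x j a := by
  rw [specializes_pi]
  intro i
  rcases eq_or_ne i j with rfl | hij
  · simpa using h
  · rw [Function.update_of_ne hij]

/-- An infinite product of non-T1 spaces is not TD: some point has a singleton
that is not locally closed. -/
theorem stmt_17 {ι : Type*} [Infinite ι] (X : ι → Type*)
    [∀ i, TopologicalSpace (X i)] (h : ∀ i, ¬ T1Space (X i)) :
    ∃ x : (∀ i, X i),
      ¬ ∃ U F : Set (∀ i, X i), IsOpen U ∧ IsClosed F ∧ ({x} : Set (∀ i, X i)) = U ∩ F := by
  classical
  choose x y hxy hne using fun i => exists_specializes_ne_of_not_t1Space (h i)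
  refine ⟨x, fun hx => ?_⟩
  obtain ⟨U, hU, hUx⟩ :=
    IsLocallyClosed.exists_mem_nhds_forall_specializes hx (Set.mem_singleton x)
  obtain ⟨j, hj⟩ := (eventually_cofinite_update_mem_of_mem_nhds hU).exists
  have hupdate := hUx _ (hj (y j)) (specializes_update_self (hxy j))
  exact hne j (by simpa using congrFun hupdate j)
end
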